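/- The set S₃ is free of local redundancy with respect to Bob's qubit–qutrit decomposition: writing Bob's ℂ⁶ as ℂ²⊗ℂ³ via |0⟩=|00⟩, |1⟩=|01⟩, |2⟩=|02⟩, |3⟩=|10⟩, |4⟩=|11⟩, |5⟩=|12⟩, the reduced states of |φ₃⟩ = (|1⟩−|2⟩)⊗(|0⟩−|4⟩) and |φ₄⟩ = (|0⟩−|1⟩)⊗(|2⟩−|3⟩) obtained by tracing out Bob's qutrit subsystem (equivalently, their partial inner product over the qutrit factor) are non-orthogonal: tracing out b₂ from |φ₃⟩⟨φ₃| and |φ₄⟩⟨φ₄| yields operators ρ₃, ρ₄ on ℂ⁶(Alice)⊗ℂ²(b₁) with Tr(ρ₃ρ₄) ≠ 0. -/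

import Mathlib

open scoped BigOperators

noncomputable section

def e6 (i : Fin 6) : Fin 6 → ℂ := fun j => if j = i then 1 else 0

/-- Bob's factor of `|φ₃⟩` in the qubit–qutrit splitting: `|00⟩ − |11⟩`. -/
def bv3 : Fin 2 × Fin 3 → ℂ :=
  fun y => (if y = (0, 0) then (1 : ℂ) else 0) - (if y = (1, 1) then 1 else 0)

/-- Bob's factor of `|φ₄⟩` in the qubit–qutrit splitting: `|02⟩ − |10⟩`. -/
def bv4 : Fin 2 × Fin 3 → ℂ :=
  fun y => (if y = (0, 2) then (1 : ℂ) else 0) - (if y = (1, 0) then 1 else 0)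

/-- `|φ₃⟩ = (|1⟩−|2⟩)_A ⊗ (|00⟩−|11⟩)_{b₁b₂}` in ℂ⁶⊗ℂ²⊗ℂ³. -/
def φ3 : Fin 6 × Fin 2 × Fin 3 → ℂ := fun x => (e6 1 - e6 2) x.1 * bv3 x.2

/-- `|φ₄⟩ = (|0⟩−|1⟩)_A ⊗ (|02⟩−|10⟩)_{b₁b₂}` in ℂ⁶⊗ℂ²⊗ℂ³. -/
def φ4 : Fin 6 × Fin 2 × Fin 3 → ℂ := fun x => (e6 0 - e6 1) x.1 * bv4 x.2

/-- Partial trace of `|φ⟩⟨φ|` over Bob's qutrit subsystem `b₂`, yielding an operator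
on ℂ⁶(Alice)⊗ℂ²(b₁). -/
def red (φ : Fin 6 × Fin 2 × Fin 3 → ℂ) :
    Matrix (Fin 6 × Fin 2) (Fin 6 × Fin 2) ℂ :=
  fun x y => ∑ k : Fin 3, φ (x.1, x.2, k) * star (φ (y.1, y.2, k))

/-! Both states are product states `a ⊗ b` across Alice | b₁b₂, so `Tr_{b₂}|a ⊗ b⟩⟨a ⊗ b|` is the
Kronecker product `|a⟩⟨a| ⊗ Tr_{b₂}|b⟩⟨b|` and `Tr(ρ₃ρ₄) = |⟨a₃, a₄⟩|² · Tr(σ₃σ₄)`. Alice's overlap is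
`⟨|1⟩−|2⟩, |0⟩−|1⟩⟩ = −1`, and each Bob factor is maximally entangled between `b₁` and `b₂`, so
both `σ₃` and `σ₄` are the identity on `b₁`; hence `Tr(ρ₃ρ₄) = 2`. -/

open Matrix
open scoped Kronecker

section

variable {R ι β κ : Type*} [CommSemiring R] [StarRing R]

def partialTraceRight [Fintype κ] (b : β × κ → R) : Matrix β β R :=
  fun i j => ∑ k, b (i, k) * star (b (j, k))

theorem trace_vecMulVec_star_mul_vecMulVec_star [Fintype ι] (u w : ι → R) :
    trace (vecMulVec u (star u) * vecMulVec w (star w)) = (star u ⬝ᵥ w) * star (star u ⬝ᵥ w) := by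
  rw [vecMulVec_mul_vecMulVec, trace_vecMulVec, dotProduct_smul, smul_eq_mul,
    dotProduct_comm u, star_dotProduct w u, mul_comm]

end

theorem red_eq_kronecker (a : Fin 6 → ℂ) (b : Fin 2 × Fin 3 → ℂ) :
    red (fun x => a x.1 * b x.2) = vecMulVec a (star a) ⊗ₖ partialTraceRight b := by
  ext ⟨i, j⟩ ⟨i', j'⟩
  simp only [red, partialTraceRight, kronecker_apply, vecMulVec_apply, Finset.mul_sum,
    star_mul', Pi.star_apply]
  exact Finset.sum_congr rfl fun _ _ => by ring

theorem partialTraceRight_bv3 : partialTraceRight bv3 = 1 := by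
  ext i j
  fin_cases i <;> fin_cases j <;> simp [partialTraceRight, bv3]

theorem partialTraceRight_bv4 : partialTraceRight bv4 = 1 := by
  ext i j
  fin_cases i <;> fin_cases j <;> simp [partialTraceRight, bv4]

theorem star_e6_one_sub_e6_two_dotProduct : star (e6 1 - e6 2) ⬝ᵥ (e6 0 - e6 1) = -1 := by
  simp [dotProduct, e6, Fin.sum_univ_succ]

/-- the reduced states `ρ₃ = Tr_{b₂}|φ₃⟩⟨φ₃|` and `ρ₄ = Tr_{b₂}|φ₄⟩⟨φ₄|`
are non-orthogonal: `Tr(ρ₃ρ₄) ≠ 0`; this is the local irredundancy of `S₃` with respect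
to Bob's qubit–qutrit decomposition. -/
theorem stmt17 : (red φ3 * red φ4).trace ≠ 0 := by
  have h3 : red φ3 = vecMulVec (e6 1 - e6 2) (star (e6 1 - e6 2)) ⊗ₖ 1 := by
    rw [← partialTraceRight_bv3]; exact red_eq_kronecker _ _
  have h4 : red φ4 = vecMulVec (e6 0 - e6 1) (star (e6 0 - e6 1)) ⊗ₖ 1 := by
    rw [← partialTraceRight_bv4]; exact red_eq_kronecker _ _
  rw [h3, h4, ← mul_kronecker_mul, trace_kronecker, trace_vecMulVec_star_mul_vecMulVec_star,
    star_e6_one_sub_e6_two_dotProduct]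
  norm_num

end
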